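/- arXiv:1403.5741 — 3 statements merged into one kernel-verified Lean document; each statement's English description precedes it below -/
import Mathlib

section
/- Let E be a locally convex space and c : ℝ → E a locally Lipschitz curve. Then for any convergent sequence of real numbers (t_n) with limit a, the sequence (c(t_n)) Mackey-converges to c(a), i.e., there exist an absolutely convex bounded set B ⊆ E and a sequence (μ_n) of reals converging to 0 with c(t_n) - c(a) ∈ μ_n B for all n. -/
open Filter Topology Set Bornology Pointwise

universe u v

/-- Gâteaux derivative of `Φ` at `x` in direction `v`, with value `w`. -/
def HasGDerivAt {E : Type u} {F : Type v} [AddCommGroup E] [Module ℝ E]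
    [AddCommGroup F] [Module ℝ F] [TopologicalSpace F]
    (Φ : E → F) (x v : E) (w : F) : Prop :=
  Tendsto (fun t : ℝ => t⁻¹ • (Φ (x + t • v) - Φ x)) (𝓝[≠] (0 : ℝ)) (𝓝 w)

/-- Derivative of a curve `c : ℝ → E` at `t`, with value `v`. -/
def CurveDerivAt {E : Type u} [AddCommGroup E] [Module ℝ E] [TopologicalSpace E]
    (c : ℝ → E) (v : E) (t : ℝ) : Prop :=
  Tendsto (fun h : ℝ => h⁻¹ • (c (t + h) - c t)) (𝓝[≠] (0 : ℝ)) (𝓝 v)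

/-- The curve `c` is of class `C^k`: derivatives up to order `k` exist and are continuous. -/
def IsCkCurve {E : Type u} [AddCommGroup E] [Module ℝ E] [TopologicalSpace E]
    (k : ℕ) (c : ℝ → E) : Prop :=
  ∃ D : ℕ → ℝ → E, D 0 = c ∧ (∀ n < k, ∀ t, CurveDerivAt (D n) (D (n + 1) t) t) ∧
    ∀ n ≤ k, Continuous (D n)

/-- The curve `c` is smooth (`C^∞`): all iterated derivatives exist and are continuous. -/
def IsSmoothCurve {E : Type u} [AddCommGroup E] [Module ℝ E] [TopologicalSpace E]
    (c : ℝ → E) : Prop :=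
  ∃ D : ℕ → ℝ → E, D 0 = c ∧ (∀ n, ∀ t, CurveDerivAt (D n) (D (n + 1) t) t) ∧
    ∀ n, Continuous (D n)

/-- The set of difference quotients of `c` over `J`. -/
def DiffQuotients {E : Type u} [AddCommGroup E] [Module ℝ E]
    (c : ℝ → E) (J : Set ℝ) : Set E :=
  {x | ∃ t₁ ∈ J, ∃ t₂ ∈ J, t₁ ≠ t₂ ∧ x = (t₂ - t₁)⁻¹ • (c t₂ - c t₁)}

/-- `c` is Lipschitz on `J`: its set of difference quotients over `J` is bounded. -/
def LipschitzOnSet {E : Type u} [AddCommGroup E] [Module ℝ E] [TopologicalSpace E]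
    (c : ℝ → E) (J : Set ℝ) : Prop :=
  IsVonNBounded ℝ (DiffQuotients c J)

/-- `c` is locally Lipschitz: every real has a neighborhood on which `c` is Lipschitz. -/
def LocallyLipschitzCurve {E : Type u} [AddCommGroup E] [Module ℝ E] [TopologicalSpace E]
    (c : ℝ → E) : Prop :=
  ∀ t : ℝ, ∃ J ∈ 𝓝 t, LipschitzOnSet c J

/-- `c` is of class `Lip^k`: derivatives up to order `k` exist and the `k`-th one is
locally Lipschitz. -/
def IsLipkCurve {E : Type u} [AddCommGroup E] [Module ℝ E] [TopologicalSpace E]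
    (k : ℕ) (c : ℝ → E) : Prop :=
  ∃ D : ℕ → ℝ → E, D 0 = c ∧ (∀ n < k, ∀ t, CurveDerivAt (D n) (D (n + 1) t) t) ∧
    LocallyLipschitzCurve (D k)

/-- A set is absolutely convex if it is convex and balanced. -/
def AbsolutelyConvex {E : Type u} [AddCommGroup E] [Module ℝ E] (B : Set E) : Prop :=
  Convex ℝ B ∧ Balanced ℝ B

/-- A sequence `x` Mackey-converges to `l`. -/
def MackeyConvSeq {E : Type u} [AddCommGroup E] [Module ℝ E] [TopologicalSpace E]
    (x : ℕ → E) (l : E) : Prop :=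
  ∃ B : Set E, AbsolutelyConvex B ∧ IsVonNBounded ℝ B ∧
    ∃ μ : ℕ → ℝ, Tendsto μ atTop (𝓝 (0 : ℝ)) ∧ ∀ n, x n - l ∈ μ n • B

/-- `E` is Mackey-complete: every Mackey-Cauchy net converges. -/
def MackeyComplete (E : Type u) [AddCommGroup E] [Module ℝ E] [TopologicalSpace E] : Prop :=
  ∀ (ι : Type) [Nonempty ι] [SemilatticeSup ι] (x : ι → E),
    (∃ B : Set E, AbsolutelyConvex B ∧ IsVonNBounded ℝ B ∧
      ∃ μ : ι × ι → ℝ, Tendsto μ atTop (𝓝 (0 : ℝ)) ∧ ∀ i j, x i - x j ∈ μ (i, j) • B) →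
    ∃ l, Tendsto x atTop (𝓝 l)

/-- The Mackey-closure (`c^∞`) topology: the finest topology on `E` making all smooth
curves `ℝ → E` continuous. -/
def cInfTopology (E : Type u) [AddCommGroup E] [Module ℝ E] [TopologicalSpace E] :
    TopologicalSpace E :=
  ⨆ c : {c : ℝ → E // IsSmoothCurve c}, TopologicalSpace.coinduced c.1 inferInstance

/-- `Φ` is conveniently smooth on `U`: it sends smooth curves into `U` to smooth curves. -/
def ConvSmoothOn {E : Type u} {F : Type v} [AddCommGroup E] [Module ℝ E] [TopologicalSpace E]
    [AddCommGroup F] [Module ℝ F] [TopologicalSpace F]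
    (Φ : E → F) (U : Set E) : Prop :=
  ∀ c : ℝ → E, IsSmoothCurve c → (∀ t, c t ∈ U) → IsSmoothCurve (Φ ∘ c)

/-- Bastiani `C^k` maps: `C^0` means continuous on `U`; `C^{k+1}` means the Gâteaux
differential exists on `U × E` and is `C^k` there. -/
def IsCBastOn (F : Type v) [AddCommGroup F] [Module ℝ F] [TopologicalSpace F] :
    (k : ℕ) → (E : Type u) → [AddCommGroup E] → [Module ℝ E] → [TopologicalSpace E] →
      (E → F) → Set E → Prop
  | 0, _, _, _, _, Φ, U => ContinuousOn Φ U
  | k + 1, E, iA, iM, iT, Φ, U =>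
      letI : AddCommGroup E := iA
      letI : Module ℝ E := iM
      letI : TopologicalSpace E := iT
      ∃ D : E × E → F, (∀ x ∈ U, ∀ v, HasGDerivAt Φ x v (D (x, v))) ∧
        IsCBastOn F k (E × E) D (U ×ˢ (Set.univ : Set E))

/-- `Φ` is smooth on `U` in the sense of Bastiani. -/
def BastSmoothOn {E : Type u} {F : Type v} [AddCommGroup E] [Module ℝ E] [TopologicalSpace E]
    [AddCommGroup F] [Module ℝ F] [TopologicalSpace F]
    (Φ : E → F) (U : Set E) : Prop :=
  ∀ k : ℕ, IsCBastOn F k E Φ U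

/-- The absolutely convex hull of the closure of `A`. -/
def absConvexHullOfClosure {E : Type u} [AddCommGroup E] [Module ℝ E] [TopologicalSpace E]
    (A : Set E) : Set E :=
  ⋂₀ {t | closure A ⊆ t ∧ AbsolutelyConvex t}

/-! Near `a`, the curve satisfies `c s - c a = (s - a) • q` with `q` a difference quotient over a
neighbourhood `J` of `a`, so once `t n ∈ J` the bounded set of difference quotients and the scalars
`t n - a → 0` witness Mackey convergence; the finitely many earlier terms are absorbed into the
bounded set with scalar `1`. -/

theorem IsVonNBounded.absConvexHull {𝕜 E : Type*} [NontriviallyNormedField 𝕜] [PartialOrder 𝕜]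
    [AddCommGroup E] [Module 𝕜 E] [TopologicalSpace E] [ContinuousSMul 𝕜 E]
    [LocallyConvexSpace 𝕜 E] {S : Set E} (hS : IsVonNBounded 𝕜 S) :
    IsVonNBounded 𝕜 (absConvexHull 𝕜 S) := by
  intro V hV
  obtain ⟨W, ⟨hW, hWconv⟩, hWV⟩ := (nhds_hasBasis_absConvex 𝕜 E).mem_iff.mp hV
  filter_upwards [hS hW] with r hr
  calc _root_.absConvexHull 𝕜 S ⊆ r • W := absConvexHull_min hr ⟨hWconv.1.smul r, hWconv.2.smul r⟩
    _ ⊆ r • V := smul_set_mono hWV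

theorem mackeyConvSeq_of_eventually_mem_smul {E : Type*} [AddCommGroup E] [Module ℝ E]
    [TopologicalSpace E] [ContinuousSMul ℝ E] [LocallyConvexSpace ℝ E]
    {x : ℕ → E} {l : E} {S : Set E} {μ : ℕ → ℝ} (hS : IsVonNBounded ℝ S)
    (hμ : Tendsto μ atTop (𝓝 0)) (hx : ∀ᶠ n in atTop, x n - l ∈ μ n • S) :
    MackeyConvSeq x l := by
  obtain ⟨N, hN⟩ := eventually_atTop.mp hx
  set B := absConvexHull ℝ (S ∪ (fun n => x n - l) '' Iio N)
  have hB : IsVonNBounded ℝ B :=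
    IsVonNBounded.absConvexHull (hS.union ((finite_Iio N).image _).isVonNBounded)
  refine ⟨B, ⟨convex_absConvexHull, balanced_absConvexHull⟩, hB,
    fun n => if n < N then 1 else μ n, ?_, fun n => ?_⟩
  · refine hμ.congr' ?_
    filter_upwards [eventually_ge_atTop N] with n hn
    simp [not_lt.mpr hn]
  · dsimp only
    by_cases hn : n < N
    · rw [if_pos hn, one_smul]
      exact subset_absConvexHull (Or.inr ⟨n, hn, rfl⟩)
    · rw [if_neg hn]
      exact smul_set_mono (subset_absConvexHull.trans' subset_union_left) (hN n (not_lt.mp hn))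

theorem sub_mem_smul_insert_diffQuotients {E : Type*} [AddCommGroup E] [Module ℝ E]
    {c : ℝ → E} {J : Set ℝ} {s a : ℝ} (hs : s ∈ J) (ha : a ∈ J) :
    c s - c a ∈ (s - a) • insert 0 (DiffQuotients c J) := by
  rcases eq_or_ne s a with rfl | hsa
  · simp
  · refine ⟨(s - a)⁻¹ • (c s - c a), Or.inr ⟨a, ha, s, hs, hsa.symm, rfl⟩, ?_⟩
    exact smul_inv_smul₀ (sub_ne_zero.mpr hsa) _

theorem locallyLipschitz_preserves_mackey_convergence_general {E : Type*} [AddCommGroup E] [Module ℝ E] [TopologicalSpace E]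
    [ContinuousSMul ℝ E] [LocallyConvexSpace ℝ E]
    (c : ℝ → E) (hc : LocallyLipschitzCurve c) (t : ℕ → ℝ) (a : ℝ)
    (ht : Filter.Tendsto t Filter.atTop (nhds a)) :
    MackeyConvSeq (fun n => c (t n)) (c a) := by
  obtain ⟨J, hJ, hLip⟩ := hc a
  refine mackeyConvSeq_of_eventually_mem_smul (hLip.insert 0) (μ := fun n => t n - a) ?_ ?_
  · simpa using ht.sub_const a
  · filter_upwards [ht hJ] with n hn
    exact sub_mem_smul_insert_diffQuotients hn (mem_of_mem_nhds hJ)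

theorem locallyLipschitz_preserves_mackey_convergence {E : Type*} [AddCommGroup E] [Module ℝ E] [TopologicalSpace E]
    [IsTopologicalAddGroup E] [ContinuousSMul ℝ E] [LocallyConvexSpace ℝ E] [T2Space E]
    (c : ℝ → E) (hc : LocallyLipschitzCurve c) (t : ℕ → ℝ) (a : ℝ)
    (ht : Filter.Tendsto t Filter.atTop (nhds a)) :
    MackeyConvSeq (fun n => c (t n)) (c a) :=
  locallyLipschitz_preserves_mackey_convergence_general c hc t a ht
end

section
/- Let E be a locally convex space, (x_n)_{n≥1} a sequence in E and x ∈ E. If (x_n) converges fast to x, then there exists a smooth curve c : ℝ → E with c(1/n) = x_n for every n ≥ 1 and c(0) = x. -/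
open Filter Topology Set Bornology Pointwise

universe u v

/-!
Fix a smooth bump `φ` with `φ 0 = 1` supported in `[-1, 1]` and set
`c t = l + ∑ₘ φ (8 m² (t - 1/m)) • (x m - l)`. The windows `|t - 1/m| ≤ 1/(8 m²)` carrying the
summands are pairwise disjoint and accumulate only at `0`, so away from `0` the series is locally
finite and can be differentiated termwise. Near `0` the `k`-th derivative is, on the window of `m`
(where `t ≥ 1/(2m)`), the single term `(8 m²)ᵏ φ⁽ᵏ⁾(…) • (x m - l)`; since `m^(2k+2) • (x m - l)`
stays bounded, its difference quotient at `0` is `O(t)` times a bounded vector and tends to `0`.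
-/

section Curves

variable {E : Type*} [AddCommGroup E] [Module ℝ E] [TopologicalSpace E]

namespace CurveDerivAt

variable {c g : ℝ → E} {v : E} {t : ℝ}

theorem congr_of_eventuallyEq (h : CurveDerivAt g v t) (hcg : c =ᶠ[𝓝 t] g) :
    CurveDerivAt c v t := by
  have hshift : Tendsto (t + ·) (𝓝[≠] (0 : ℝ)) (𝓝 t) :=
    ((continuous_const_add t).tendsto' 0 t (add_zero t)).mono_left nhdsWithin_le_nhds
  refine Tendsto.congr' ?_ h
  filter_upwards [hshift.eventually hcg] with s hs
  rw [hs, hcg.eq_of_nhds]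

theorem _root_.HasDerivAt.curveDerivAt_smul_const [ContinuousSMul ℝ E] {f : ℝ → ℝ} {f' : ℝ}
    (hf : HasDerivAt f f' t) (v : E) : CurveDerivAt (fun s => f s • v) (f' • v) t :=
  (hasDerivAt_iff_tendsto_slope_zero.mp hf).smul_const v |>.congr fun h => by
    rw [smul_eq_mul, mul_smul, sub_smul]

theorem sum [ContinuousAdd E] {ι : Type*} (F : Finset ι) {c : ι → ℝ → E} {v : ι → E}
    (h : ∀ i ∈ F, CurveDerivAt (c i) (v i) t) :
    CurveDerivAt (fun s => ∑ i ∈ F, c i s) (∑ i ∈ F, v i) t :=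
  (tendsto_finsetSum F h).congr fun h => by rw [← Finset.sum_sub_distrib, Finset.smul_sum]

theorem const_add (h : CurveDerivAt c v t) (a : E) : CurveDerivAt (fun s => a + c s) v t := by
  simpa [CurveDerivAt] using h

theorem continuousAt [ContinuousAdd E] [ContinuousSMul ℝ E] (h : CurveDerivAt c v t) :
    ContinuousAt c t := by
  have hshift : 𝓝[≠] t = map (t + ·) (𝓝[≠] (0 : ℝ)) := by simp
  rw [← continuousWithinAt_compl_self, ContinuousWithinAt, hshift, tendsto_map'_iff]
  have hlim : Tendsto (fun s : ℝ => c t + s • (s⁻¹ • (c (t + s) - c t))) (𝓝[≠] 0)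
      (𝓝 (c t + (0 : ℝ) • v)) :=
    tendsto_const_nhds.add ((tendsto_id.mono_left nhdsWithin_le_nhds).smul h)
  rw [zero_smul, add_zero] at hlim
  refine hlim.congr' ?_
  filter_upwards [self_mem_nhdsWithin] with s (hs : s ≠ 0)
  simp [smul_inv_smul₀ hs]

end CurveDerivAt

theorem curveDerivAt_tsum_of_eventually_eq_zero [ContinuousAdd E] {f g : ℕ → ℝ → E} {t : ℝ}
    {N : ℕ} (hf : ∀ n, CurveDerivAt (f n) (g n t) t)
    (hN : ∀ᶠ s in 𝓝 t, ∀ n, N ≤ n → f n s = 0 ∧ g n s = 0) :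
    CurveDerivAt (fun s => ∑' n, f n s) (∑' n, g n t) t := by
  have hfin : (fun s => ∑' n, f n s) =ᶠ[𝓝 t] fun s => ∑ n ∈ Finset.range N, f n s :=
    hN.mono fun s hs =>
      tsum_eq_sum (s := Finset.range N) fun n hn => (hs n (by simpa using hn)).1
  rw [tsum_eq_sum (s := Finset.range N) fun n hn => (hN.self_of_nhds n (by simpa using hn)).2]
  exact (CurveDerivAt.sum _ fun n _ => hf n).congr_of_eventuallyEq hfin

theorem isSmoothCurve_of_curveDerivAt [ContinuousAdd E] [ContinuousSMul ℝ E] {D : ℕ → ℝ → E}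
    (hD : ∀ n t, CurveDerivAt (D n) (D (n + 1) t) t) : IsSmoothCurve (D 0) :=
  ⟨D, rfl, hD, fun n => continuous_iff_continuousAt.mpr fun t => (hD n t).continuousAt⟩

theorem IsSmoothCurve.const_add [ContinuousAdd E] {c : ℝ → E} (hc : IsSmoothCurve c) (a : E) :
    IsSmoothCurve (fun t => a + c t) := by
  obtain ⟨D, rfl, hD, hcont⟩ := hc
  refine ⟨fun n t => (if n = 0 then a else 0) + D n t, by simp, fun n t => ?_, fun n => ?_⟩
  · simpa using (hD n t).const_add _
  · exact continuous_const.add (hcont n)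

end Curves

theorem Bornology.IsVonNBounded.tendsto_zero_of_forall_eq_smul {ι 𝕜 E : Type*} [NormedField 𝕜]
    [AddCommGroup E] [Module 𝕜 E] [TopologicalSpace E] {S : Set E} (hS : IsVonNBounded 𝕜 S)
    {l : Filter ι} {f : ι → E} {ε : ι → ℝ} (hε : Tendsto ε l (𝓝 0))
    (hf : ∀ i, ∃ a : 𝕜, ‖a‖ ≤ ε i ∧ ∃ z ∈ S, f i = a • z) : Tendsto f l (𝓝 0) := by
  choose a ha z hz hfz using hf
  rw [show f = a • z from funext hfz]
  exact hS.smul_tendsto_zero (.of_forall hz) (squeeze_zero_norm ha hε)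

noncomputable section BumpProfile

def unitBump : ContDiffBump (0 : ℝ) := ⟨1 / 2, 1, by norm_num, by norm_num⟩

theorem unitBump_zero : unitBump (0 : ℝ) = 1 :=
  unitBump.one_of_mem_closedBall (by norm_num [unitBump])

theorem hasDerivAt_iteratedDeriv_unitBump (k : ℕ) (u : ℝ) :
    HasDerivAt (iteratedDeriv k unitBump) (iteratedDeriv (k + 1) unitBump u) u := by
  rw [iteratedDeriv_succ]
  exact ((unitBump.contDiff (n := ⊤)).differentiable_iteratedDeriv k
    (by exact_mod_cast ENat.natCast_lt_top k) u).hasDerivAt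

theorem tsupport_iteratedDeriv_unitBump_subset (k : ℕ) :
    tsupport (iteratedDeriv k unitBump) ⊆ Metric.closedBall 0 1 := by
  induction k with
  | zero => rw [iteratedDeriv_zero, unitBump.tsupport_eq]; simp [unitBump]
  | succ k ih => exact (iteratedDeriv_succ (f := ⇑unitBump) ▸ tsupport_deriv_subset).trans ih

theorem iteratedDeriv_unitBump_eq_zero {k : ℕ} {u : ℝ} (hu : u ∉ Metric.closedBall 0 1) :
    iteratedDeriv k unitBump u = 0 :=
  image_eq_zero_of_notMem_tsupport fun h => hu (tsupport_iteratedDeriv_unitBump_subset k h)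

theorem exists_bound_iteratedDeriv_unitBump (k : ℕ) :
    ∃ M, ∀ u, |iteratedDeriv k unitBump u| ≤ M :=
  (hasDerivAt_iteratedDeriv_unitBump k · |>.continuousAt) |> continuous_iff_continuousAt.mpr
    |>.bounded_above_of_compact_support
      (isCompact_closedBall 0 1 |>.of_isClosed_subset (isClosed_tsupport _)
        (tsupport_iteratedDeriv_unitBump_subset k))

end BumpProfile

noncomputable section Windows

def bumpWindow (m : ℕ) : Set ℝ := {t | |8 * (m : ℝ) ^ 2 * (t - (m : ℝ)⁻¹)| ≤ 1}

def bumpAt (k m : ℕ) (t : ℝ) : ℝ :=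
  (8 * (m : ℝ) ^ 2) ^ k * iteratedDeriv k unitBump (8 * (m : ℝ) ^ 2 * (t - (m : ℝ)⁻¹))

variable {k m n : ℕ} {t : ℝ}

theorem hasDerivAt_bumpAt (k m : ℕ) (t : ℝ) : HasDerivAt (bumpAt k m) (bumpAt (k + 1) m t) t := by
  have hinner :
      HasDerivAt (fun s : ℝ => 8 * (m : ℝ) ^ 2 * (s - (m : ℝ)⁻¹)) (8 * (m : ℝ) ^ 2) t := by
    simpa using ((hasDerivAt_id t).sub_const (m : ℝ)⁻¹).const_mul (8 * (m : ℝ) ^ 2)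
  exact (((hasDerivAt_iteratedDeriv_unitBump k _).comp t hinner).const_mul
    ((8 * (m : ℝ) ^ 2) ^ k)).congr_deriv (by rw [bumpAt, pow_succ]; ring)

theorem bumpAt_eq_zero_of_notMem (ht : t ∉ bumpWindow m) : bumpAt k m t = 0 :=
  mul_eq_zero_of_right _ <| iteratedDeriv_unitBump_eq_zero <| by
    simpa [bumpWindow, dist_zero_right] using ht

theorem abs_bumpAt_le {M : ℝ} (hM : ∀ u, |iteratedDeriv k unitBump u| ≤ M) (m : ℕ) (t : ℝ) :
    |bumpAt k m t| ≤ (8 * (m : ℝ) ^ 2) ^ k * M := by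
  rw [bumpAt, abs_mul, abs_of_nonneg (by positivity)]
  exact mul_le_mul_of_nonneg_left (hM _) (by positivity)

theorem bumpAt_zero_inv (m : ℕ) : bumpAt 0 m (m : ℝ)⁻¹ = 1 := by
  simp [bumpAt, unitBump_zero]

theorem mem_bumpWindow_iff (hm : 1 ≤ m) :
    t ∈ bumpWindow m ↔ 8 * (m : ℝ) ^ 2 * t - 8 * m ∈ Icc (-1) 1 := by
  have hm0 : (m : ℝ) ≠ 0 := by positivity
  rw [bumpWindow, mem_ofPred_eq, mem_Icc, ← abs_le]
  field_simp

theorem one_le_two_mul_mul_of_mem_bumpWindow (hm : 1 ≤ m) (ht : t ∈ bumpWindow m) :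
    1 ≤ 2 * t * m := by
  have hm' : (1 : ℝ) ≤ m := by exact_mod_cast hm
  have := ((mem_bumpWindow_iff hm).mp ht).1
  nlinarith

theorem mul_le_two_of_mem_bumpWindow (hm : 1 ≤ m) (ht : t ∈ bumpWindow m) : t * m ≤ 2 := by
  have hm' : (1 : ℝ) ≤ m := by exact_mod_cast hm
  have := ((mem_bumpWindow_iff hm).mp ht).2
  nlinarith

theorem disjoint_bumpWindow_of_lt (hm : 1 ≤ m) (hmn : m < n) :
    Disjoint (bumpWindow m) (bumpWindow n) := by
  refine Set.disjoint_left.mpr fun t htm htn => ?_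
  have hm' : (1 : ℝ) ≤ m := by exact_mod_cast hm
  have hlo := ((mem_bumpWindow_iff hm).mp htm).1
  have hhi := ((mem_bumpWindow_iff (hm.trans hmn.le)).mp htn).2
  have hlo' : (8 * m - 1) * (n : ℝ) ^ 2 ≤ 8 * m ^ 2 * n ^ 2 * t := by nlinarith
  have hhi' : 8 * (m : ℝ) ^ 2 * n ^ 2 * t ≤ (8 * n + 1) * m ^ 2 := by nlinarith
  -- `(8m - 1) n² > (8n + 1) m²` as soon as `n ≥ m + 1`
  obtain ⟨d, hd, hnd⟩ : ∃ d : ℝ, 1 ≤ d ∧ (n : ℝ) = m + d :=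
    ⟨n - m, by linarith [show (m : ℝ) + 1 ≤ n by exact_mod_cast hmn], by ring⟩
  rw [hnd] at hlo' hhi'
  have := mul_nonneg (sq_nonneg (m : ℝ)) (sub_nonneg.2 hd)
  have := mul_nonneg (mul_nonneg (by linarith : (0 : ℝ) ≤ m) (by linarith : (0 : ℝ) ≤ d))
    (sub_nonneg.2 hd)
  have := mul_nonneg (sq_nonneg d) (sub_nonneg.2 hm')
  nlinarith

theorem eq_of_mem_bumpWindow_of_mem_bumpWindow (hm : 1 ≤ m) (hn : 1 ≤ n)
    (htm : t ∈ bumpWindow m) (htn : t ∈ bumpWindow n) : m = n := by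
  by_contra hne
  rcases lt_or_gt_of_ne hne with hmn | hnm
  · exact Set.disjoint_left.mp (disjoint_bumpWindow_of_lt hm hmn) htm htn
  · exact Set.disjoint_left.mp (disjoint_bumpWindow_of_lt hn hnm) htn htm

theorem inv_mem_bumpWindow (m : ℕ) : (m : ℝ)⁻¹ ∈ bumpWindow m := by
  simp [bumpWindow]

theorem notMem_bumpWindow_of_nonpos (hm : 1 ≤ m) (ht : t ≤ 0) : t ∉ bumpWindow m := fun htm => by
  have := one_le_two_mul_mul_of_mem_bumpWindow hm htm
  have : (0 : ℝ) ≤ m := m.cast_nonneg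
  nlinarith

theorem eventually_bumpAt_eq_zero (ht : t ≠ 0) :
    ∃ N : ℕ, ∀ᶠ s in 𝓝 t, ∀ k m, N ≤ m → bumpAt k m s = 0 := by
  rcases ht.lt_or_gt with ht | ht
  · exact ⟨1, eventually_of_mem (Iio_mem_nhds ht) fun s hs k m hm =>
      bumpAt_eq_zero_of_notMem (notMem_bumpWindow_of_nonpos hm (le_of_lt hs))⟩
  refine ⟨⌈4 / t⌉₊ + 1, eventually_of_mem (Ioi_mem_nhds (half_lt_self ht)) fun s hs k m hm =>
    bumpAt_eq_zero_of_notMem fun hsm => ?_⟩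
  have hsm := mul_le_two_of_mem_bumpWindow (by omega) hsm
  have hmt : 4 / t < m := Nat.lt_of_ceil_lt (by omega)
  rw [div_lt_iff₀ ht] at hmt
  have : t / 2 < s := hs
  nlinarith

end Windows

section BumpSeries

variable {E : Type*} [AddCommGroup E] [Module ℝ E] [TopologicalSpace E] (y : ℕ → E)
  {k m : ℕ} {t : ℝ}

noncomputable def bumpSeries (k : ℕ) (t : ℝ) : E :=
  ∑' n : ℕ, bumpAt k (n + 1) t • y (n + 1)

theorem bumpSeries_eq_of_mem_bumpWindow (hm : 1 ≤ m) (ht : t ∈ bumpWindow m) :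
    bumpSeries y k t = bumpAt k m t • y m := by
  obtain ⟨m, rfl⟩ := Nat.exists_eq_add_of_le' hm
  refine tsum_eq_single m fun n hn => ?_
  rw [bumpAt_eq_zero_of_notMem fun htn => hn ?_, zero_smul]
  exact Nat.succ_injective (eq_of_mem_bumpWindow_of_mem_bumpWindow (by omega) hm htn ht)

theorem bumpSeries_eq_zero_of_forall_notMem (ht : ∀ m, 1 ≤ m → t ∉ bumpWindow m) :
    bumpSeries y k t = 0 := by
  simp [bumpSeries, bumpAt_eq_zero_of_notMem (ht _ _)]

theorem bumpSeries_of_nonpos (ht : t ≤ 0) : bumpSeries y k t = 0 :=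
  bumpSeries_eq_zero_of_forall_notMem y fun _ hm => notMem_bumpWindow_of_nonpos hm ht

theorem exists_inv_smul_bumpSeries_eq_smul (k : ℕ) :
    ∃ C : ℝ, ∀ h : ℝ, ∃ a : ℝ, ‖a‖ ≤ C * |h| ∧
      ∃ z ∈ {z | ∃ n : ℕ, 1 ≤ n ∧ z = ((n : ℝ) ^ (2 * k + 2)) • y n},
        h⁻¹ • bumpSeries y k h = a • z := by
  obtain ⟨M, hM⟩ := exists_bound_iteratedDeriv_unitBump k
  have hM0 : 0 ≤ M := (abs_nonneg _).trans (hM 0)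
  refine ⟨4 * 8 ^ k * M, fun h => ?_⟩
  by_cases hw : ∃ m, 1 ≤ m ∧ h ∈ bumpWindow m
  · obtain ⟨m, hm, hhm⟩ := hw
    have hm' : (1 : ℝ) ≤ m := by exact_mod_cast hm
    have h2hm := one_le_two_mul_mul_of_mem_bumpWindow hm hhm
    have hh : 0 < h := by nlinarith
    refine ⟨h⁻¹ * bumpAt k m h / (m : ℝ) ^ (2 * k + 2), ?_, _, ⟨m, hm, rfl⟩, ?_⟩
    · rw [Real.norm_eq_abs, abs_div, abs_mul, abs_inv, abs_of_pos hh,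
        abs_of_pos (by positivity : (0 : ℝ) < m ^ (2 * k + 2)), div_le_iff₀ (by positivity),
        inv_mul_le_iff₀ hh]
      calc |bumpAt k m h| ≤ (8 * (m : ℝ) ^ 2) ^ k * M := abs_bumpAt_le hM m h
        _ = 8 ^ k * M * m ^ (2 * k) := by ring
        _ ≤ 8 ^ k * M * m ^ (2 * k) * (2 * h * m) ^ 2 :=
          le_mul_of_one_le_right (by positivity) (one_le_pow₀ h2hm)
        _ = h * (4 * 8 ^ k * M * h * m ^ (2 * k + 2)) := by ring
    · rw [bumpSeries_eq_of_mem_bumpWindow y hm hhm, smul_smul, smul_smul]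
      field_simp
  · push Not at hw
    refine ⟨0, by simp only [norm_zero]; positivity, _, ⟨1, le_rfl, rfl⟩, ?_⟩
    rw [bumpSeries_eq_zero_of_forall_notMem y hw, smul_zero, zero_smul]

variable [ContinuousAdd E] [ContinuousSMul ℝ E]

theorem curveDerivAt_bumpSeries
    (hy : ∀ α : ℕ, IsVonNBounded ℝ {z | ∃ n : ℕ, 1 ≤ n ∧ z = ((n : ℝ) ^ α) • y n})
    (k : ℕ) (t : ℝ) : CurveDerivAt (bumpSeries y k) (bumpSeries y (k + 1) t) t := by
  rcases eq_or_ne t 0 with rfl | ht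
  · obtain ⟨C, hC⟩ := exists_inv_smul_bumpSeries_eq_smul y k
    have hε : Tendsto (fun h : ℝ => C * |h|) (𝓝[≠] 0) (𝓝 0) := by
      simpa using (tendsto_const_nhds.mul (continuous_abs.tendsto' (0 : ℝ) 0 abs_zero)).mono_left
        nhdsWithin_le_nhds
    simpa [CurveDerivAt, bumpSeries_of_nonpos y le_rfl] using
      (hy (2 * k + 2)).tendsto_zero_of_forall_eq_smul hε hC
  · obtain ⟨N, hN⟩ := eventually_bumpAt_eq_zero ht
    refine curveDerivAt_tsum_of_eventually_eq_zero (N := N)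
      (f := fun n s => bumpAt k (n + 1) s • y (n + 1))
      (g := fun n s => bumpAt (k + 1) (n + 1) s • y (n + 1))
      (fun n => (hasDerivAt_bumpAt k (n + 1) t).curveDerivAt_smul_const (y (n + 1))) ?_
    filter_upwards [hN] with s hs n hn
    simp [hs k (n + 1) (by omega), hs (k + 1) (n + 1) (by omega)]

theorem isSmoothCurve_bumpSeries
    (hy : ∀ α : ℕ, IsVonNBounded ℝ {z | ∃ n : ℕ, 1 ≤ n ∧ z = ((n : ℝ) ^ α) • y n}) :
    IsSmoothCurve (bumpSeries y 0) :=
  isSmoothCurve_of_curveDerivAt (curveDerivAt_bumpSeries y hy)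

end BumpSeries

theorem special_curve_lemma_general {E : Type*} [AddCommGroup E] [Module ℝ E] [TopologicalSpace E]
    [IsTopologicalAddGroup E] [ContinuousSMul ℝ E] (x : ℕ → E) (l : E)
    (h : ∀ α : ℕ, Bornology.IsVonNBounded ℝ
      {y : E | ∃ n : ℕ, 1 ≤ n ∧ y = ((n : ℝ) ^ α) • (x n - l)}) :
    ∃ c : ℝ → E, IsSmoothCurve c ∧ (∀ n : ℕ, 1 ≤ n → c (1 / (n : ℝ)) = x n) ∧
      c 0 = l := by
  refine ⟨fun t => l + bumpSeries (fun n => x n - l) 0 t,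
    (isSmoothCurve_bumpSeries (fun n => x n - l) h).const_add l, fun n hn => ?_, ?_⟩
  · dsimp only
    rw [one_div, bumpSeries_eq_of_mem_bumpWindow _ hn (inv_mem_bumpWindow n), bumpAt_zero_inv,
      one_smul, add_sub_cancel]
  · simp [bumpSeries_of_nonpos _ le_rfl]

theorem special_curve_lemma {E : Type*} [AddCommGroup E] [Module ℝ E] [TopologicalSpace E]
    [IsTopologicalAddGroup E] [ContinuousSMul ℝ E] [LocallyConvexSpace ℝ E] [T2Space E] (x : ℕ → E) (l : E)
    (h : ∀ α : ℕ, Bornology.IsVonNBounded ℝ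
      {y : E | ∃ n : ℕ, 1 ≤ n ∧ y = ((n : ℝ) ^ α) • (x n - l)}) :
    ∃ c : ℝ → E, IsSmoothCurve c ∧ (∀ n : ℕ, 1 ≤ n → c (1 / (n : ℝ)) = x n) ∧
      c 0 = l :=
  special_curve_lemma_general x l h
end

section
/- Let E be a metrizable locally convex space (e.g., a Fréchet space) and U an absolutely convex subset of E containing 0 which absorbs every bounded subset of E. Then U is a neighborhood of 0 in the given topology. -/
open Filter Topology Set Bornology Pointwise

universe u v

/-- A point of `c⁻ⁿ • Vₙ` outside `U`, for a decreasing basis `(Vₙ)` and `‖c‖ > 1`, yields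
a null sequence `cⁿ • xₙ` whose range `U` fails to absorb. -/
theorem mem_nhds_zero_of_absorbs_isVonNBounded {𝕜 E : Type*} [NontriviallyNormedField 𝕜]
    [AddCommGroup E] [Module 𝕜 E] [TopologicalSpace E] [FirstCountableTopology E]
    [IsTopologicalAddGroup E] [ContinuousSMul 𝕜 E] {U : Set E}
    (hU : ∀ B : Set E, IsVonNBounded 𝕜 B → Absorbs 𝕜 U B) : U ∈ 𝓝 (0 : E) := by
  obtain ⟨c, hc⟩ := NormedField.exists_one_lt_norm 𝕜
  have hc0 : ∀ n : ℕ, c ^ n ≠ 0 := fun n => pow_ne_zero n (norm_pos_iff.1 (one_pos.trans hc))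
  obtain ⟨V, hV⟩ := (𝓝 (0 : E)).exists_antitone_basis
  by_contra hU0
  have hescape : ∀ n : ℕ, ∃ x ∈ (c ^ n)⁻¹ • V n, x ∉ U := fun n =>
    not_subset.1 fun hsub => hU0 <| mem_of_superset
      ((set_smul_mem_nhds_zero_iff (inv_ne_zero (hc0 n))).2 (hV.mem n)) hsub
  choose x hxV hxU using hescape
  have hnull : Tendsto (fun n => c ^ n • x n) atTop (𝓝 0) :=
    hV.tendsto fun n => (mem_inv_smul_set_iff₀ (hc0 n) _ _).1 (hxV n)
  obtain ⟨r, hr⟩ := absorbs_iff_norm.1 (hU _ (hnull.isVonNBounded_range 𝕜))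
  obtain ⟨n, hn⟩ := ((tendsto_pow_atTop_atTop_of_one_lt hc).eventually_ge_atTop r).exists
  have hmem : c ^ n • x n ∈ c ^ n • U := hr (c ^ n) (by rwa [norm_pow]) ⟨n, rfl⟩
  exact hxU n ((smul_mem_smul_set_iff₀ (hc0 n) _ _).1 hmem)

theorem Balanced.absorbs_of_subset_smul {𝕜 E : Type*} [NormedDivisionRing 𝕜] [AddCommGroup E]
    [Module 𝕜 E] {U B : Set E} {a : 𝕜} (hU : Balanced 𝕜 U) (hB : B ⊆ a • U) :
    Absorbs 𝕜 U B :=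
  .of_norm ⟨‖a‖, fun _ hc => hB.trans (hU.smul_mono hc)⟩

theorem bornivorous_is_neighborhood_general {E : Type*} [AddCommGroup E] [Module ℝ E]
    [TopologicalSpace E] [IsTopologicalAddGroup E] [ContinuousSMul ℝ E]
    [TopologicalSpace.MetrizableSpace E] (U : Set E)
    (hUc : AbsolutelyConvex U)
    (habs : ∀ B : Set E, Bornology.IsVonNBounded ℝ B → ∃ r : ℝ, 0 < r ∧ B ⊆ r • U) :
    U ∈ nhds (0 : E) :=
  mem_nhds_zero_of_absorbs_isVonNBounded fun B hB =>
    let ⟨_, _, hBU⟩ := habs B hB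
    hUc.2.absorbs_of_subset_smul hBU

theorem bornivorous_is_neighborhood {E : Type*} [AddCommGroup E] [Module ℝ E]
    [TopologicalSpace E] [IsTopologicalAddGroup E] [ContinuousSMul ℝ E]
    [LocallyConvexSpace ℝ E] [TopologicalSpace.MetrizableSpace E] (U : Set E)
    (h0 : (0 : E) ∈ U) (hUc : AbsolutelyConvex U)
    (habs : ∀ B : Set E, Bornology.IsVonNBounded ℝ B → ∃ r : ℝ, 0 < r ∧ B ⊆ r • U) :
    U ∈ nhds (0 : E) :=
  bornivorous_is_neighborhood_general U hUc habs
end
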